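/- arXiv:2002.07836 — 2 statements merged into one kernel-verified Lean document; each statement's English description precedes it below -/
import Mathlib

section
/- Define the constant C_𝓛 = ( (1+αL)^{N−1} α ρ + (ρ/L)(1+αL)^N ((1+αL)^{N−1} − 1) ) (1+αL)^N and the meta objective gradient ∇𝓛(w) = ∫_I Gᵢ(w) dμ(i). Then for every w, u ∈ ℝ^d, ‖∇𝓛(w) − ∇𝓛(u)‖ ≤ ( (1+αL)^{2N} L + C_𝓛 ∫_I ‖∇lᵢ(w)‖ dμ(i) ) ‖w − u‖. -/
open MeasureTheory

noncomputable def innerPath {d : ℕ} (α : ℝ) (l : EuclideanSpace ℝ (Fin d) → ℝ) :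
    ℕ → EuclideanSpace ℝ (Fin d) → EuclideanSpace ℝ (Fin d)
  | 0, w => w
  | j + 1, w => innerPath α l j w - α • gradient l (innerPath α l j w)

noncomputable def hessProd {d : ℕ} (α : ℝ) (N : ℕ)
    (lS : EuclideanSpace ℝ (Fin d) → ℝ) (w : EuclideanSpace ℝ (Fin d)) :
    EuclideanSpace ℝ (Fin d) →L[ℝ] EuclideanSpace ℝ (Fin d) :=
  ((List.range N).map fun j =>
    ContinuousLinearMap.id ℝ (EuclideanSpace ℝ (Fin d)) -
      α • fderiv ℝ (gradient lS) (innerPath α lS j w)).prod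

noncomputable def metaGrad {d : ℕ} (α : ℝ) (N : ℕ)
    (lS lT : EuclideanSpace ℝ (Fin d) → ℝ) (w : EuclideanSpace ℝ (Fin d)) :
    EuclideanSpace ℝ (Fin d) :=
  hessProd α N lS w (gradient lT (innerPath α lS N w))

/-!
Every factor `I - α ∇²l` of the meta gradient has norm at most `1 + αL`, and one gradient step
is `(1 + αL)`-Lipschitz, so the inner path and the gradients along it grow at most like
`(1 + αL)^j`. Telescoping the product of `N` factors, the `j`-th factor moves by at most
`αρ (1 + αL)^j ‖w - u‖` (Lipschitz Hessian), which sums to `(ρ/L)((1 + αL)^N - 1) ‖w - u‖`.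
Writing `P(w) g(w) - P(u) g(u) = P(u) (g(w) - g(u)) + (P(w) - P(u)) g(w)` bounds the change of a
single task's meta gradient, and integrating over the tasks gives the theorem.
-/

section ProductBounds

variable {R : Type*} [SeminormedRing R] {a b : ℕ → R} {c : ℝ}

lemma norm_prod_map_range_le (h1 : ‖(1 : R)‖ ≤ 1) (ha : ∀ j, ‖a j‖ ≤ c) (N : ℕ) :
    ‖((List.range N).map a).prod‖ ≤ c ^ N := by
  induction N with
  | zero => simpa using h1
  | succ N ih =>
    rw [List.range_succ, List.map_append, List.prod_append, pow_succ]
    simp only [List.map_cons, List.map_nil, List.prod_cons, List.prod_nil, mul_one]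
    exact (norm_mul_le _ _).trans
      (mul_le_mul ih (ha N) (norm_nonneg _) ((norm_nonneg _).trans ih))

lemma norm_prod_map_range_sub_le (h1 : ‖(1 : R)‖ ≤ 1) (ha : ∀ j, ‖a j‖ ≤ c)
    (hb : ∀ j, ‖b j‖ ≤ c) (N : ℕ) :
    ‖((List.range N).map a).prod - ((List.range N).map b).prod‖ ≤
      c ^ (N - 1) * ∑ j ∈ Finset.range N, ‖a j - b j‖ := by
  induction N with
  | zero => simp
  | succ N ih =>
    set Pa := ((List.range N).map a).prod
    set Pb := ((List.range N).map b).prod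
    set S := ∑ j ∈ Finset.range N, ‖a j - b j‖
    have hc : 0 ≤ c := (norm_nonneg _).trans (ha 0)
    have hsplit : Pa * a N - Pb * b N = Pa * (a N - b N) + (Pa - Pb) * b N := by noncomm_ring
    have hshift : c ^ (N - 1) * S * c = c ^ N * S := by
      rcases N with _ | N
      · simp [S]
      · rw [Nat.add_sub_cancel, pow_succ]; ring
    have hPa : ‖Pa‖ ≤ c ^ N := norm_prod_map_range_le h1 ha N
    simp only [List.range_succ, List.map_append, List.map_cons, List.map_nil, List.prod_append,
      List.prod_cons, List.prod_nil, mul_one, Finset.sum_range_succ, Nat.add_sub_cancel]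
    calc ‖Pa * a N - Pb * b N‖
        ≤ ‖Pa‖ * ‖a N - b N‖ + ‖Pa - Pb‖ * ‖b N‖ := by
          rw [hsplit]
          exact (norm_add_le _ _).trans (add_le_add (norm_mul_le _ _) (norm_mul_le _ _))
      _ ≤ c ^ N * ‖a N - b N‖ + c ^ (N - 1) * S * c := by
          gcongr
          exact hb N
      _ = c ^ N * (S + ‖a N - b N‖) := by rw [hshift]; ring

end ProductBounds

section GradientStep

variable {E : Type*} [SeminormedAddCommGroup E] [NormedSpace ℝ E] {g : E → E} {α L : ℝ}

lemma norm_sub_smul_sub_sub_smul_le (hα : 0 ≤ α) (hg : ∀ x y, ‖g x - g y‖ ≤ L * ‖x - y‖)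
    (x y : E) : ‖(x - α • g x) - (y - α • g y)‖ ≤ (1 + α * L) * ‖x - y‖ :=
  calc ‖(x - α • g x) - (y - α • g y)‖ = ‖(x - y) - α • (g x - g y)‖ := by
        rw [smul_sub]; abel_nf
    _ ≤ ‖x - y‖ + ‖α • (g x - g y)‖ := norm_sub_le _ _
    _ ≤ ‖x - y‖ + α * (L * ‖x - y‖) := by
        rw [norm_smul, Real.norm_of_nonneg hα]
        gcongr
        exact hg x y
    _ = (1 + α * L) * ‖x - y‖ := by ring

lemma norm_apply_sub_smul_le (hα : 0 ≤ α) (hg : ∀ x y, ‖g x - g y‖ ≤ L * ‖x - y‖) (x : E) :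
    ‖g (x - α • g x)‖ ≤ (1 + α * L) * ‖g x‖ :=
  calc ‖g (x - α • g x)‖ ≤ ‖g x‖ + ‖g (x - α • g x) - g x‖ := norm_le_insert' _ _
    _ ≤ ‖g x‖ + L * ‖(x - α • g x) - x‖ := by gcongr; exact hg _ _
    _ = (1 + α * L) * ‖g x‖ := by
        rw [sub_sub_cancel_left, norm_neg, norm_smul, Real.norm_of_nonneg hα]; ring

lemma norm_id_sub_smul_le (hα : 0 ≤ α) {T : E →L[ℝ] E} (hT : ‖T‖ ≤ L) :
    ‖ContinuousLinearMap.id ℝ E - α • T‖ ≤ 1 + α * L :=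
  calc ‖ContinuousLinearMap.id ℝ E - α • T‖ ≤ ‖ContinuousLinearMap.id ℝ E‖ + ‖α • T‖ :=
        norm_sub_le _ _
    _ ≤ 1 + α * L := by
        rw [norm_smul, Real.norm_of_nonneg hα]
        exact add_le_add ContinuousLinearMap.norm_id_le (mul_le_mul_of_nonneg_left hT hα)

end GradientStep

section InnerPath

variable {d : ℕ} {α L ρ : ℝ} {f : EuclideanSpace ℝ (Fin d) → ℝ}

lemma norm_innerPath_sub_le (hα : 0 ≤ α) (hL : 0 ≤ L)
    (hgrad : ∀ w u, ‖gradient f w - gradient f u‖ ≤ L * ‖w - u‖)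
    (w u : EuclideanSpace ℝ (Fin d)) (j : ℕ) :
    ‖innerPath α f j w - innerPath α f j u‖ ≤ (1 + α * L) ^ j * ‖w - u‖ := by
  induction j with
  | zero => simp [innerPath]
  | succ j ih =>
    calc ‖innerPath α f (j + 1) w - innerPath α f (j + 1) u‖
        ≤ (1 + α * L) * ‖innerPath α f j w - innerPath α f j u‖ :=
          norm_sub_smul_sub_sub_smul_le hα hgrad _ _
      _ ≤ (1 + α * L) * ((1 + α * L) ^ j * ‖w - u‖) :=
          mul_le_mul_of_nonneg_left ih (by positivity)
      _ = (1 + α * L) ^ (j + 1) * ‖w - u‖ := by ring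

lemma norm_gradient_innerPath_le (hα : 0 ≤ α) (hL : 0 ≤ L)
    (hgrad : ∀ w u, ‖gradient f w - gradient f u‖ ≤ L * ‖w - u‖)
    (w : EuclideanSpace ℝ (Fin d)) (j : ℕ) :
    ‖gradient f (innerPath α f j w)‖ ≤ (1 + α * L) ^ j * ‖gradient f w‖ := by
  induction j with
  | zero => simp [innerPath]
  | succ j ih =>
    calc ‖gradient f (innerPath α f (j + 1) w)‖
        ≤ (1 + α * L) * ‖gradient f (innerPath α f j w)‖ :=
          norm_apply_sub_smul_le hα hgrad _
      _ ≤ (1 + α * L) * ((1 + α * L) ^ j * ‖gradient f w‖) :=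
          mul_le_mul_of_nonneg_left ih (by positivity)
      _ = (1 + α * L) ^ (j + 1) * ‖gradient f w‖ := by ring

end InnerPath

section HessProd

variable {d : ℕ} {α L ρ : ℝ} {f : EuclideanSpace ℝ (Fin d) → ℝ}

lemma norm_id_sub_smul_fderiv_gradient_le (hα : 0 ≤ α) (hL : 0 ≤ L)
    (hgrad : ∀ w u, ‖gradient f w - gradient f u‖ ≤ L * ‖w - u‖)
    (x : EuclideanSpace ℝ (Fin d)) :
    ‖ContinuousLinearMap.id ℝ _ - α • fderiv ℝ (gradient f) x‖ ≤ 1 + α * L :=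
  norm_id_sub_smul_le hα (norm_fderiv_le_of_lip' ℝ hL (.of_forall fun y => hgrad y x))

lemma norm_hessProd_le (hα : 0 ≤ α) (hL : 0 ≤ L)
    (hgrad : ∀ w u, ‖gradient f w - gradient f u‖ ≤ L * ‖w - u‖)
    (w : EuclideanSpace ℝ (Fin d)) (N : ℕ) :
    ‖hessProd α N f w‖ ≤ (1 + α * L) ^ N :=
  norm_prod_map_range_le ContinuousLinearMap.norm_id_le
    (fun _ => norm_id_sub_smul_fderiv_gradient_le hα hL hgrad _) N

lemma norm_hessProd_sub_le (hα : 0 < α) (hL : 0 < L) (hρ : 0 ≤ ρ)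
    (hgrad : ∀ w u, ‖gradient f w - gradient f u‖ ≤ L * ‖w - u‖)
    (hhess : ∀ w u, ‖fderiv ℝ (gradient f) w - fderiv ℝ (gradient f) u‖ ≤ ρ * ‖w - u‖)
    (w u : EuclideanSpace ℝ (Fin d)) (N : ℕ) :
    ‖hessProd α N f w - hessProd α N f u‖ ≤
      ρ / L * (1 + α * L) ^ (N - 1) * ((1 + α * L) ^ N - 1) * ‖w - u‖ := by
  set H := fderiv ℝ (gradient f)
  have hfactor : ∀ j, ‖(ContinuousLinearMap.id ℝ _ - α • H (innerPath α f j w)) -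
      (ContinuousLinearMap.id ℝ _ - α • H (innerPath α f j u))‖ ≤
        α * ρ * (1 + α * L) ^ j * ‖w - u‖ := fun j =>
    calc _ = α * ‖H (innerPath α f j w) - H (innerPath α f j u)‖ := by
          rw [sub_sub_sub_cancel_left, norm_sub_rev]
          exact (congrArg norm (smul_sub α _ _).symm).trans (norm_smul_of_nonneg hα.le _)
      _ ≤ α * (ρ * ((1 + α * L) ^ j * ‖w - u‖)) := by
          gcongr
          exact (hhess _ _).trans (mul_le_mul_of_nonneg_left
            (norm_innerPath_sub_le hα.le hL.le hgrad w u j) hρ)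
      _ = α * ρ * (1 + α * L) ^ j * ‖w - u‖ := by ring
  have hq : 1 + α * L ≠ 1 := (lt_add_of_pos_right 1 (mul_pos hα hL)).ne'
  calc ‖hessProd α N f w - hessProd α N f u‖
      ≤ (1 + α * L) ^ (N - 1) * ∑ j ∈ Finset.range N,
          ‖(ContinuousLinearMap.id ℝ _ - α • H (innerPath α f j w)) -
            (ContinuousLinearMap.id ℝ _ - α • H (innerPath α f j u))‖ :=
        norm_prod_map_range_sub_le ContinuousLinearMap.norm_id_le
          (fun _ => norm_id_sub_smul_fderiv_gradient_le hα.le hL.le hgrad _)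
          (fun _ => norm_id_sub_smul_fderiv_gradient_le hα.le hL.le hgrad _) N
    _ ≤ (1 + α * L) ^ (N - 1) * ∑ j ∈ Finset.range N, α * ρ * (1 + α * L) ^ j * ‖w - u‖ := by
        gcongr with j; exact hfactor j
    _ = ρ / L * (1 + α * L) ^ (N - 1) * ((1 + α * L) ^ N - 1) * ‖w - u‖ := by
        rw [← Finset.sum_mul, ← Finset.mul_sum, geom_sum_eq hq]
        field_simp
        ring

end HessProd

lemma norm_apply_sub_apply_le {E F : Type*} [SeminormedAddCommGroup E] [SeminormedAddCommGroup F]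
    [NormedSpace ℝ E] [NormedSpace ℝ F] (T S : E →L[ℝ] F) (x y : E) :
    ‖T x - S y‖ ≤ ‖S‖ * ‖x - y‖ + ‖T - S‖ * ‖x‖ := by
  have hsplit : T x - S y = S (x - y) + (T - S) x := by
    rw [map_sub, sub_apply]; abel
  rw [hsplit]
  exact (norm_add_le _ _).trans (add_le_add (S.le_opNorm _) ((T - S).le_opNorm _))

/-- The constant `C_𝓛` of the paper. -/
noncomputable def metaGradLipCoeff (α L ρ : ℝ) (N : ℕ) : ℝ :=
  ((1 + α * L) ^ (N - 1) * α * ρ +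
    (ρ / L) * (1 + α * L) ^ N * ((1 + α * L) ^ (N - 1) - 1)) * (1 + α * L) ^ N

/-- An equality for `N ≥ 1`; for `N = 0` the left side vanishes. -/
lemma le_metaGradLipCoeff {α L ρ : ℝ} (hα : 0 ≤ α) (hL : 0 < L) (hρ : 0 ≤ ρ) (N : ℕ) :
    ρ / L * (1 + α * L) ^ (N - 1) * ((1 + α * L) ^ N - 1) * (1 + α * L) ^ N ≤
      metaGradLipCoeff α L ρ N := by
  unfold metaGradLipCoeff
  gcongr ?_ * _
  rcases N with _ | N
  · simp only [zero_tsub, pow_zero, sub_self, mul_zero, mul_one, add_zero]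
    positivity
  · apply le_of_eq
    rw [Nat.add_sub_cancel]
    field_simp
    ring

lemma norm_metaGrad_sub_le {d : ℕ} {α L ρ : ℝ} {N : ℕ} {f : EuclideanSpace ℝ (Fin d) → ℝ}
    (hα : 0 < α) (hL : 0 < L) (hρ : 0 ≤ ρ)
    (hgrad : ∀ w u, ‖gradient f w - gradient f u‖ ≤ L * ‖w - u‖)
    (hhess : ∀ w u, ‖fderiv ℝ (gradient f) w - fderiv ℝ (gradient f) u‖ ≤ ρ * ‖w - u‖)
    (w u : EuclideanSpace ℝ (Fin d)) :
    ‖metaGrad α N f f w - metaGrad α N f f u‖ ≤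
      ((1 + α * L) ^ (2 * N) * L + metaGradLipCoeff α L ρ N * ‖gradient f w‖) * ‖w - u‖ := by
  set q := 1 + α * L
  have hP := norm_hessProd_le hα.le hL.le hgrad u N
  have hdP := norm_hessProd_sub_le hα hL hρ hgrad hhess w u N
  have hgw := norm_gradient_innerPath_le hα.le hL.le hgrad w N
  have hdg : ‖gradient f (innerPath α f N w) - gradient f (innerPath α f N u)‖ ≤
      L * (q ^ N * ‖w - u‖) :=
    (hgrad _ _).trans (mul_le_mul_of_nonneg_left (norm_innerPath_sub_le hα.le hL.le hgrad w u N)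
      hL.le)
  calc ‖metaGrad α N f f w - metaGrad α N f f u‖
      ≤ ‖hessProd α N f u‖ *
            ‖gradient f (innerPath α f N w) - gradient f (innerPath α f N u)‖ +
          ‖hessProd α N f w - hessProd α N f u‖ * ‖gradient f (innerPath α f N w)‖ :=
        norm_apply_sub_apply_le _ _ _ _
    _ ≤ q ^ N * (L * (q ^ N * ‖w - u‖)) +
          ρ / L * q ^ (N - 1) * (q ^ N - 1) * ‖w - u‖ * (q ^ N * ‖gradient f w‖) :=
        add_le_add (mul_le_mul hP hdg (norm_nonneg _) (by positivity))
          (mul_le_mul hdP hgw (norm_nonneg _) ((norm_nonneg _).trans hdP))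
    _ = (q ^ (2 * N) * L +
          ρ / L * q ^ (N - 1) * (q ^ N - 1) * q ^ N * ‖gradient f w‖) * ‖w - u‖ := by ring
    _ ≤ (q ^ (2 * N) * L + metaGradLipCoeff α L ρ N * ‖gradient f w‖) * ‖w - u‖ := by
        gcongr
        exact le_metaGradLipCoeff hα.le hL hρ N

lemma norm_integral_sub_integral_le {I E : Type*} [MeasurableSpace I] {μ : Measure I}
    [IsProbabilityMeasure μ] [NormedAddCommGroup E] [NormedSpace ℝ E] {F G : I → E}
    {g : I → ℝ} {a b r : ℝ} (hF : Integrable F μ) (hG : Integrable G μ) (hg : Integrable g μ)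
    (h : ∀ᵐ i ∂μ, ‖F i - G i‖ ≤ (a + b * g i) * r) :
    ‖∫ i, F i ∂μ - ∫ i, G i ∂μ‖ ≤ (a + b * ∫ i, g i ∂μ) * r := by
  have hint : Integrable (fun i => a + b * g i) μ := (integrable_const a).add (hg.const_mul b)
  rw [← integral_sub hF hG]
  calc ‖∫ i, F i - G i ∂μ‖ ≤ ∫ i, (a + b * g i) * r ∂μ :=
        norm_integral_le_of_norm_le (hint.mul_const r) h
    _ = (a + b * ∫ i, g i ∂μ) * r := by
        rw [integral_mul_const, integral_add (integrable_const a) (hg.const_mul b),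
          integral_const, integral_const_mul, probReal_univ, one_smul]

theorem stmt6_general {d : ℕ} (α L ρ : ℝ) (hα : 0 < α) (hL : 0 < L) (hρ : 0 < ρ)
    (N : ℕ)
    {I : Type*} [MeasurableSpace I] (μ : Measure I) [IsProbabilityMeasure μ]
    (l : I → EuclideanSpace ℝ (Fin d) → ℝ)
    (hgrad : ∀ i, ∀ w u : EuclideanSpace ℝ (Fin d),
      ‖gradient (l i) w - gradient (l i) u‖ ≤ L * ‖w - u‖)
    (hhess : ∀ i, ∀ w u : EuclideanSpace ℝ (Fin d),
      ‖fderiv ℝ (gradient (l i)) w - fderiv ℝ (gradient (l i)) u‖ ≤ ρ * ‖w - u‖)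
    (hGint : ∀ w : EuclideanSpace ℝ (Fin d),
      Integrable (fun i => metaGrad α N (l i) (l i) w) μ)
    (hgint : ∀ w : EuclideanSpace ℝ (Fin d),
      Integrable (fun i => ‖gradient (l i) w‖) μ) :
    ∀ w u : EuclideanSpace ℝ (Fin d),
      ‖(∫ i, metaGrad α N (l i) (l i) w ∂μ) - ∫ i, metaGrad α N (l i) (l i) u ∂μ‖ ≤
        ((1 + α * L) ^ (2 * N) * L +
          (((1 + α * L) ^ (N - 1) * α * ρ +
            (ρ / L) * (1 + α * L) ^ N * ((1 + α * L) ^ (N - 1) - 1)) * (1 + α * L) ^ N) *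
            ∫ i, ‖gradient (l i) w‖ ∂μ) * ‖w - u‖ := fun w u =>
  norm_integral_sub_integral_le (hGint w) (hGint u) (hgint w) (.of_forall fun i =>
    norm_metaGrad_sub_le hα hL hρ.le (hgrad i) (hhess i) w u)

theorem stmt6 {d : ℕ} (hd : 1 ≤ d) (α L ρ : ℝ) (hα : 0 < α) (hL : 0 < L) (hρ : 0 < ρ)
    (N : ℕ) (hN : 1 ≤ N)
    {I : Type*} [MeasurableSpace I] (μ : Measure I) [IsProbabilityMeasure μ]
    (l : I → EuclideanSpace ℝ (Fin d) → ℝ)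
    (hl : ∀ i, ContDiff ℝ 2 (l i))
    (hgrad : ∀ i, ∀ w u : EuclideanSpace ℝ (Fin d),
      ‖gradient (l i) w - gradient (l i) u‖ ≤ L * ‖w - u‖)
    (hhess : ∀ i, ∀ w u : EuclideanSpace ℝ (Fin d),
      ‖fderiv ℝ (gradient (l i)) w - fderiv ℝ (gradient (l i)) u‖ ≤ ρ * ‖w - u‖)
    (hGint : ∀ w : EuclideanSpace ℝ (Fin d),
      Integrable (fun i => metaGrad α N (l i) (l i) w) μ)
    (hgint : ∀ w : EuclideanSpace ℝ (Fin d),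
      Integrable (fun i => ‖gradient (l i) w‖) μ) :
    ∀ w u : EuclideanSpace ℝ (Fin d),
      ‖(∫ i, metaGrad α N (l i) (l i) w ∂μ) - ∫ i, metaGrad α N (l i) (l i) u ∂μ‖ ≤
        ((1 + α * L) ^ (2 * N) * L +
          (((1 + α * L) ^ (N - 1) * α * ρ +
            (ρ / L) * (1 + α * L) ^ N * ((1 + α * L) ^ (N - 1) - 1)) * (1 + α * L) ^ N) *
            ∫ i, ‖gradient (l i) w‖ ∂μ) * ‖w - u‖ :=
  stmt6_general α L ρ hα hL hρ N μ l hgrad hhess hGint hgint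
end

section
/- For every w ∈ ℝ^d, the difference between the gradient of l and the meta gradient satisfies ‖∇l(w) − G(w)‖ ≤ C_l ‖∇l(w)‖, where C_l = (1 + αL)^{2N} − 1. -/
set_option maxHeartbeats 1000000
set_option synthInstance.maxHeartbeats 200000


open MeasureTheory

theorem hessProd_succ {d : ℕ} (α : ℝ) (n : ℕ)
    (l : EuclideanSpace ℝ (Fin d) → ℝ) (w : EuclideanSpace ℝ (Fin d)) :
    hessProd α (n + 1) l w = hessProd α n l w *
      (ContinuousLinearMap.id ℝ (EuclideanSpace ℝ (Fin d)) -
        α • fderiv ℝ (gradient l) (innerPath α l n w)) := by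
  unfold hessProd
  rw [List.range_succ, List.map_append, List.prod_append]
  simp

theorem stmt9 {d : ℕ} (hd : 1 ≤ d) (α L : ℝ) (hα : 0 < α) (hL : 0 < L)
    (N : ℕ) (hN : 1 ≤ N)
    (l : EuclideanSpace ℝ (Fin d) → ℝ) (hl : ContDiff ℝ 2 l)
    (hgrad : ∀ w u : EuclideanSpace ℝ (Fin d), ‖gradient l w - gradient l u‖ ≤ L * ‖w - u‖) :
    ∀ w : EuclideanSpace ℝ (Fin d),
      ‖gradient l w - metaGrad α N l l w‖ ≤ ((1 + α * L) ^ (2 * N) - 1) * ‖gradient l w‖ := by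
  intro w
  set β : ℝ := 1 + α * L with hβ
  have hβ1 : (1:ℝ) ≤ β := by nlinarith
  have hβ0 : (0:ℝ) ≤ β := by linarith
  -- Hessian norm bound
  have hlip : LipschitzWith L.toNNReal (gradient l) := by
    apply LipschitzWith.of_dist_le_mul
    intro x y
    simpa [dist_eq_norm, Real.coe_toNNReal L hL.le] using hgrad x y
  have hHess : ∀ u : EuclideanSpace ℝ (Fin d), ‖fderiv ℝ (gradient l) u‖ ≤ L := by
    intro u
    have h := norm_fderiv_le_of_lipschitz ℝ (x₀ := u) hlip
    rwa [Real.coe_toNNReal L hL.le] at h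
  -- factor norm bound
  have hfac : ∀ n : ℕ, ‖ContinuousLinearMap.id ℝ (EuclideanSpace ℝ (Fin d)) -
      α • fderiv ℝ (gradient l) (innerPath α l n w)‖ ≤ β := by
    intro n
    calc ‖ContinuousLinearMap.id ℝ (EuclideanSpace ℝ (Fin d)) -
        α • fderiv ℝ (gradient l) (innerPath α l n w)‖
        ≤ ‖ContinuousLinearMap.id ℝ (EuclideanSpace ℝ (Fin d))‖ +
          ‖α • fderiv ℝ (gradient l) (innerPath α l n w)‖ := norm_sub_le _ _
      _ ≤ 1 + α * L := by
          have h1 := ContinuousLinearMap.norm_id_le (E := EuclideanSpace ℝ (Fin d)) (𝕜 := ℝ)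
          have h2 : ‖α • fderiv ℝ (gradient l) (innerPath α l n w)‖ ≤ α * L := by
            rw [norm_smul, Real.norm_eq_abs, abs_of_pos hα]
            exact mul_le_mul_of_nonneg_left (hHess _) hα.le
          linarith
  -- hessProd norm bound
  have hprod : ∀ n : ℕ, ‖hessProd α n l w‖ ≤ β ^ n := by
    intro n
    induction n with
    | zero =>
        have : hessProd α 0 l w = ContinuousLinearMap.id ℝ (EuclideanSpace ℝ (Fin d)) := by
          simp [hessProd, ContinuousLinearMap.one_def]
        rw [this, pow_zero]
        exact ContinuousLinearMap.norm_id_le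
    | succ n ih =>
        rw [hessProd_succ, pow_succ]
        calc ‖hessProd α n l w * _‖ ≤ ‖hessProd α n l w‖ * ‖_‖ := norm_mul_le _ _
          _ ≤ β ^ n * β := mul_le_mul ih (hfac n) (norm_nonneg _) (by positivity)
  -- gradient growth along path
  have hgrow : ∀ n : ℕ, ‖gradient l (innerPath α l n w)‖ ≤ β ^ n * ‖gradient l w‖ := by
    intro n
    induction n with
    | zero => simp [innerPath]
    | succ n ih =>
        have hstep : ‖gradient l (innerPath α l (n+1) w) - gradient l (innerPath α l n w)‖
            ≤ L * (α * ‖gradient l (innerPath α l n w)‖) := by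
          have := hgrad (innerPath α l (n+1) w) (innerPath α l n w)
          have heq : innerPath α l (n+1) w - innerPath α l n w
              = -(α • gradient l (innerPath α l n w)) := by
            show innerPath α l n w - α • gradient l (innerPath α l n w) - innerPath α l n w = _
            abel
          rw [heq] at this
          simpa [norm_smul, Real.norm_eq_abs, abs_of_pos hα] using this
        calc ‖gradient l (innerPath α l (n+1) w)‖
            ≤ ‖gradient l (innerPath α l n w)‖ +
              ‖gradient l (innerPath α l (n+1) w) - gradient l (innerPath α l n w)‖ := by
              have := norm_add_le (gradient l (innerPath α l n w))
                (gradient l (innerPath α l (n+1) w) - gradient l (innerPath α l n w))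
              simpa using this
          _ ≤ ‖gradient l (innerPath α l n w)‖ + L * (α * ‖gradient l (innerPath α l n w)‖) :=
              by linarith
          _ = β * ‖gradient l (innerPath α l n w)‖ := by ring
          _ ≤ β * (β ^ n * ‖gradient l w‖) := mul_le_mul_of_nonneg_left ih hβ0
          _ = β ^ (n+1) * ‖gradient l w‖ := by ring
  -- main induction
  have main : ∀ n : ℕ, ‖gradient l w - metaGrad α n l l w‖ ≤ (β ^ (2 * n) - 1) * ‖gradient l w‖ := by
    intro n
    induction n with
    | zero =>
        simp [metaGrad, hessProd, innerPath, ContinuousLinearMap.one_def]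
    | succ n ih =>
        set gn := gradient l (innerPath α l n w) with hgn
        set gn1 := gradient l (innerPath α l (n+1) w) with hgn1
        set A := ContinuousLinearMap.id ℝ (EuclideanSpace ℝ (Fin d)) -
          α • fderiv ℝ (gradient l) (innerPath α l n w) with hA
        have hsplit : gradient l w - metaGrad α (n+1) l l w
            = (gradient l w - metaGrad α n l l w) + hessProd α n l w (gn - A gn1) := by
          rw [map_sub]
          have : metaGrad α (n+1) l l w = hessProd α n l w (A gn1) := by
            rw [metaGrad, hessProd_succ]; rfl
          rw [this, metaGrad]
          abel
        have hAterm : ‖gn - A gn1‖ ≤ α * L * β ^ n * ‖gradient l w‖ +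
            α * L * β ^ (n+1) * ‖gradient l w‖ := by
          have h1 : gn - A gn1 = (gn - gn1) + α • (fderiv ℝ (gradient l) (innerPath α l n w)) gn1 := by
            simp [hA, ContinuousLinearMap.sub_apply, ContinuousLinearMap.smul_apply]
            abel
          have h2 : ‖gn - gn1‖ ≤ α * L * β ^ n * ‖gradient l w‖ := by
            have hstep := hgrad (innerPath α l n w) (innerPath α l (n+1) w)
            have heq : innerPath α l n w - innerPath α l (n+1) w = α • gn := by
              show innerPath α l n w - (innerPath α l n w - α • gn) = _
              abel
            rw [heq, norm_smul, Real.norm_eq_abs, abs_of_pos hα] at hstep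
            calc ‖gn - gn1‖ ≤ L * (α * ‖gn‖) := hstep
              _ ≤ L * (α * (β ^ n * ‖gradient l w‖)) := by
                  have := hgrow n
                  nlinarith [norm_nonneg gn]
              _ = α * L * β ^ n * ‖gradient l w‖ := by ring
          have h3 : ‖α • (fderiv ℝ (gradient l) (innerPath α l n w)) gn1‖
              ≤ α * L * β ^ (n+1) * ‖gradient l w‖ := by
            rw [norm_smul, Real.norm_eq_abs, abs_of_pos hα]
            have hb : ‖(fderiv ℝ (gradient l) (innerPath α l n w)) gn1‖ ≤ L * ‖gn1‖ := by
              calc ‖(fderiv ℝ (gradient l) (innerPath α l n w)) gn1‖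
                  ≤ ‖fderiv ℝ (gradient l) (innerPath α l n w)‖ * ‖gn1‖ :=
                    ContinuousLinearMap.le_opNorm _ _
                _ ≤ L * ‖gn1‖ := mul_le_mul_of_nonneg_right (hHess _) (norm_nonneg _)
            have hg1 := hgrow (n+1)
            nlinarith [norm_nonneg gn1]
          calc ‖gn - A gn1‖ ≤ ‖gn - gn1‖ +
              ‖α • (fderiv ℝ (gradient l) (innerPath α l n w)) gn1‖ := by
                rw [h1]; exact norm_add_le _ _
            _ ≤ _ := by linarith
        have hp := hprod n
        have hterm : ‖hessProd α n l w (gn - A gn1)‖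
            ≤ β ^ n * (α * L * β ^ n * ‖gradient l w‖ + α * L * β ^ (n+1) * ‖gradient l w‖) := by
          calc ‖hessProd α n l w (gn - A gn1)‖ ≤ ‖hessProd α n l w‖ * ‖gn - A gn1‖ :=
              ContinuousLinearMap.le_opNorm _ _
            _ ≤ _ := by
                apply mul_le_mul hp hAterm (norm_nonneg _) (by positivity)
        calc ‖gradient l w - metaGrad α (n+1) l l w‖
            ≤ ‖gradient l w - metaGrad α n l l w‖ + ‖hessProd α n l w (gn - A gn1)‖ := by
              rw [hsplit]; exact norm_add_le _ _
          _ ≤ (β ^ (2 * n) - 1) * ‖gradient l w‖ +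
              β ^ n * (α * L * β ^ n * ‖gradient l w‖ + α * L * β ^ (n+1) * ‖gradient l w‖) := by
              linarith [hterm]
          _ = (β ^ (2 * (n+1)) - 1) * ‖gradient l w‖ := by
              have h2n : β ^ (2 * n) = β ^ n * β ^ n := by rw [two_mul, pow_add]
              have h2n1 : β ^ (2 * (n+1)) = β ^ n * β ^ n * β * β := by
                rw [show 2 * (n+1) = n + n + 1 + 1 by ring, pow_succ, pow_succ, pow_add]
              rw [h2n, h2n1, pow_succ]
              ring
  exact main N
end
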